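/- Let μ be a probability measure on Ω and let G, B₁, B₂ : Ω → ℝ be independent random variables where G has the Gaussian law N(M, Q), and B₁, B₂ each have the standard Gaussian law N(0, 1), with M ∈ ℝ and Q ≥ 0. Let f₀, f₁, σ, g, h₀, h₁, ℓ ∈ ℝ be constants with ℓ² + h₁²Q > 0. Define Y = f₀ + f₁G + σB₁ + gB₂ and Z = h₀ + h₁G + ℓB₂. Then for (law of Z)-almost every z ∈ ℝ, the conditional distribution of Y given Z = z is the Gaussian law N(M′(z), Q′), where M′(z) = f₀ + f₁M + (gℓ + f₁Qh₁)(ℓ² + h₁²Q)^{-1}(z − h₀ − h₁M) and Q′ = f₁²Q + σ² + g² − (gℓ + f₁Qh₁)²(ℓ² + h₁²Q)^{-1} (note Q′ ≥ 0). -/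

import Mathlib

open MeasureTheory ProbabilityTheory

namespace KalmanAux

open Real
open scoped NNReal ENNReal


lemma mp_shear2 (c : ℝ) :
    MeasurePreserving (fun p : ℝ × ℝ => (p.1, p.2 + c * p.1))
      ((volume : Measure ℝ).prod volume) ((volume : Measure ℝ).prod volume) :=
  MeasurePreserving.skew_product (g := fun x y => y + c * x) (MeasurePreserving.id _)
    (measurable_snd.add (measurable_fst.const_mul c))
    (Filter.Eventually.of_forall fun x => by
      simpa using MeasureTheory.map_add_right_eq_self (volume : Measure ℝ) (c * x))

lemma mp_shear1 (c : ℝ) :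
    MeasurePreserving (fun p : ℝ × ℝ => (p.1 + c * p.2, p.2))
      ((volume : Measure ℝ).prod volume) ((volume : Measure ℝ).prod volume) := by
  have h : (fun p : ℝ × ℝ => (p.1 + c * p.2, p.2))
      = Prod.swap ∘ (fun p : ℝ × ℝ => (p.1, p.2 + c * p.1)) ∘ Prod.swap := rfl
  rw [h]
  exact Measure.measurePreserving_swap.comp ((mp_shear2 c).comp Measure.measurePreserving_swap)




lemma map_rot_volume (a b : ℝ) (hab : a ^ 2 + b ^ 2 = 1) :
    Measure.map (fun p : ℝ × ℝ => (a * p.1 + b * p.2, -b * p.1 + a * p.2))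
      ((volume : Measure ℝ).prod volume) = (volume : Measure ℝ).prod volume := by
  by_cases hb : b = 0
  · subst hb
    rcases mul_self_eq_one_iff.mp (by nlinarith : a * a = 1) with rfl | rfl
    · have h : (fun p : ℝ × ℝ => (1 * p.1 + 0 * p.2, -0 * p.1 + 1 * p.2)) = id := by
        funext q; simp
      rw [h, Measure.map_id]
    · have h : (fun p : ℝ × ℝ => (-1 * p.1 + 0 * p.2, -0 * p.1 + -1 * p.2))
          = Prod.map (fun x : ℝ => -x) (fun x : ℝ => -x) := by
        funext q; simp [Prod.map]
      rw [h, ← Measure.map_prod_map _ _ measurable_neg measurable_neg]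
      simp [Measure.map_neg_eq_self]
  · set p := (1 - a) / b with hp
    have hpb : p * b = 1 - a := div_mul_cancel₀ _ hb
    have hpa : p * (1 + a) = b := by
      rw [hp]; field_simp; nlinarith [hab]
    have hfun : (fun q : ℝ × ℝ => (a * q.1 + b * q.2, -b * q.1 + a * q.2))
        = (fun q : ℝ × ℝ => (q.1 + p * q.2, q.2))
          ∘ ((fun q : ℝ × ℝ => (q.1, q.2 + (-b) * q.1))
          ∘ (fun q : ℝ × ℝ => (q.1 + p * q.2, q.2))) := by
      funext q
      simp only [Function.comp_apply, Prod.mk.injEq]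
      constructor
      · linear_combination (q.1 + p * q.2) * hpb - q.2 * hpa
      · linear_combination q.2 * hpb
    rw [hfun]
    exact ((mp_shear1 p).comp ((mp_shear2 (-b)).comp (mp_shear1 p))).map_eq




lemma map_withDensity_equiv {α β : Type*} [MeasurableSpace α] [MeasurableSpace β]
    (e : α ≃ᵐ β) (μ : Measure α) {f : α → ENNReal} (hf : Measurable f) :
    (μ.withDensity f).map e = (μ.map e).withDensity (fun b => f (e.symm b)) := by
  ext s hs
  have hg : Measurable (fun b => f (e.symm b)) := hf.comp e.symm.measurable
  rw [Measure.map_apply e.measurable hs, withDensity_apply _ (e.measurable hs),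
    withDensity_apply _ hs, setLIntegral_map hs hg e.measurable]
  refine (setLIntegral_congr_fun (e.measurable hs)
    (fun a _ => ?_)).symm
  rw [e.symm_apply_apply]

lemma stdprod_eq :
    (gaussianReal 0 1).prod (gaussianReal 0 1)
      = ((volume : Measure ℝ).prod volume).withDensity
          (fun p => gaussianPDF 0 1 p.1 * gaussianPDF 0 1 p.2) := by
  refine Measure.prod_eq fun A B hA hB => ?_
  rw [withDensity_apply _ (hA.prod hB), ← Measure.prod_restrict,
    lintegral_prod_mul (measurable_gaussianPDF 0 1).aemeasurable
      (measurable_gaussianPDF 0 1).aemeasurable,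
    gaussianReal_apply 0 one_ne_zero A, gaussianReal_apply 0 one_ne_zero B]

lemma pdf_radial {x y u v : ℝ} (h : u ^ 2 + v ^ 2 = x ^ 2 + y ^ 2) :
    gaussianPDF 0 1 u * gaussianPDF 0 1 v = gaussianPDF 0 1 x * gaussianPDF 0 1 y := by
  simp only [gaussianPDF]
  rw [← ENNReal.ofReal_mul (gaussianPDFReal_nonneg _ _ _),
    ← ENNReal.ofReal_mul (gaussianPDFReal_nonneg _ _ _)]
  congr 1
  simp only [gaussianPDFReal, NNReal.coe_one, mul_one, sub_zero]
  have e1 : rexp (-u ^ 2 / 2) * rexp (-v ^ 2 / 2) = rexp (-x ^ 2 / 2) * rexp (-y ^ 2 / 2) := by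
    rw [← Real.exp_add, ← Real.exp_add]; congr 1; linarith
  linear_combination ((√(2 * π))⁻¹ * (√(2 * π))⁻¹) * e1




/-- Rotation as a measurable equiv of `ℝ × ℝ`. -/
def rotEquiv (a b : ℝ) (hab : a ^ 2 + b ^ 2 = 1) : (ℝ × ℝ) ≃ᵐ (ℝ × ℝ) where
  toFun p := (a * p.1 + b * p.2, -b * p.1 + a * p.2)
  invFun q := (a * q.1 - b * q.2, b * q.1 + a * q.2)
  left_inv p :=
    Prod.ext (by simp only; linear_combination p.1 * hab)
      (by simp only; linear_combination p.2 * hab)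
  right_inv q :=
    Prod.ext (by simp only; linear_combination q.1 * hab)
      (by simp only; linear_combination q.2 * hab)
  measurable_toFun := by
    simp only [Equiv.coe_fn_mk]
    exact ((measurable_fst.const_mul a).add (measurable_snd.const_mul b)).prodMk
      ((measurable_fst.const_mul (-b)).add (measurable_snd.const_mul a))
  measurable_invFun := by
    simp only [Equiv.coe_fn_symm_mk]
    exact ((measurable_fst.const_mul a).sub (measurable_snd.const_mul b)).prodMk
      ((measurable_fst.const_mul b).add (measurable_snd.const_mul a))

lemma map_rot_stdprod (a b : ℝ) (hab : a ^ 2 + b ^ 2 = 1) :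
    ((gaussianReal 0 1).prod (gaussianReal 0 1)).map
        (fun p : ℝ × ℝ => (a * p.1 + b * p.2, -b * p.1 + a * p.2))
      = (gaussianReal 0 1).prod (gaussianReal 0 1) := by
  have hmeas : Measurable (fun p : ℝ × ℝ => gaussianPDF 0 1 p.1 * gaussianPDF 0 1 p.2) :=
    ((measurable_gaussianPDF 0 1).comp measurable_fst).mul
      ((measurable_gaussianPDF 0 1).comp measurable_snd)
  have hcoe : ⇑(rotEquiv a b hab) = fun p : ℝ × ℝ => (a * p.1 + b * p.2, -b * p.1 + a * p.2) :=
    rfl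
  have hcoes : ∀ q : ℝ × ℝ, (rotEquiv a b hab).symm q = (a * q.1 - b * q.2, b * q.1 + a * q.2) :=
    fun q => rfl
  have h : ((gaussianReal 0 1).prod (gaussianReal 0 1)).map (rotEquiv a b hab)
      = (gaussianReal 0 1).prod (gaussianReal 0 1) := by
    rw [stdprod_eq, map_withDensity_equiv _ _ hmeas]
    have hvol : Measure.map (⇑(rotEquiv a b hab)) ((volume : Measure ℝ).prod volume)
        = (volume : Measure ℝ).prod volume := by rw [hcoe]; exact map_rot_volume a b hab
    rw [hvol]
    congr 1
    funext q
    rw [hcoes q]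
    exact pdf_radial (by simp only; linear_combination (q.1 ^ 2 + q.2 ^ 2) * hab)
  rw [← hcoe]
  exact h




lemma nnreal_sq (c : ℝ) (d : ℝ) (hd : 0 ≤ d) (h : c ^ 2 = d) :
    (NNReal.mk (c ^ 2) (sq_nonneg c)) * 1 = d.toNNReal := by
  ext
  simp [h, Real.coe_toNNReal _ hd]

/-- Pushforward of the standard Gaussian product by a linear map with orthogonal rows. -/
lemma map_lin2_stdprod (a b a' b' : ℝ) (horth : a * a' + b * b' = 0)
    (h1 : a ≠ 0 ∨ b ≠ 0) :
    ((gaussianReal 0 1).prod (gaussianReal 0 1)).map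
        (fun p : ℝ × ℝ => (a * p.1 + b * p.2, a' * p.1 + b' * p.2))
      = (gaussianReal 0 ((a ^ 2 + b ^ 2).toNNReal)).prod
          (gaussianReal 0 ((a' ^ 2 + b' ^ 2).toNNReal)) := by
  have hs : 0 < a ^ 2 + b ^ 2 := by
    rcases h1 with h | h <;> positivity
  set r : ℝ := Real.sqrt (a ^ 2 + b ^ 2) with hrdef
  have hr2 : r ^ 2 = a ^ 2 + b ^ 2 := Real.sq_sqrt hs.le
  have hr : 0 < r := Real.sqrt_pos.mpr hs
  set t : ℝ := (a * b' - a' * b) / (a ^ 2 + b ^ 2) with htdef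
  have ha' : a' = -(t * b) := by
    rw [htdef]
    field_simp
    linear_combination a * horth
  have hb' : b' = t * a := by
    rw [htdef]
    field_simp
    linear_combination b * horth
  have hunit : (a / r) ^ 2 + (b / r) ^ 2 = 1 := by
    field_simp [hr.ne']
    linarith [hr2]
  have hfun : (fun p : ℝ × ℝ => (a * p.1 + b * p.2, a' * p.1 + b' * p.2))
      = (Prod.map (fun x : ℝ => r * x) (fun x : ℝ => (t * r) * x))
        ∘ (fun p : ℝ × ℝ => ((a / r) * p.1 + (b / r) * p.2,
            -(b / r) * p.1 + (a / r) * p.2)) := by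
    funext q
    refine Prod.ext ?_ ?_ <;> simp only [Function.comp_apply, Prod.map]
    · field_simp
    · field_simp
      linear_combination (q.1) * ha' + (q.2) * hb'
  rw [hfun, ← Measure.map_map (by fun_prop) (by fun_prop), map_rot_stdprod _ _ hunit,
    ← Measure.map_prod_map _ _ (by fun_prop) (by fun_prop),
    gaussianReal_map_const_mul r, gaussianReal_map_const_mul (t * r)]
  have htr : (t * r) ^ 2 = a' ^ 2 + b' ^ 2 := by
    have h2 : a' ^ 2 + b' ^ 2 = t ^ 2 * (a ^ 2 + b ^ 2) := by rw [ha', hb']; ring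
    rw [h2, ← hr2]; ring
  rw [mul_zero, mul_zero, nnreal_sq r (a ^ 2 + b ^ 2) hs.le hr2,
    nnreal_sq (t * r) (a' ^ 2 + b' ^ 2) (by positivity) htr]




lemma map_lin1_stdprod (a b : ℝ) :
    ((gaussianReal 0 1).prod (gaussianReal 0 1)).map
        (fun p : ℝ × ℝ => a * p.1 + b * p.2)
      = gaussianReal 0 ((a ^ 2 + b ^ 2).toNNReal) := by
  by_cases h : a = 0 ∧ b = 0
  · obtain ⟨rfl, rfl⟩ := h
    simp only [zero_mul, add_zero]
    rw [Measure.map_const]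
    simp [gaussianReal_zero_var]
  · have h1 : a ≠ 0 ∨ b ≠ 0 := by tauto
    have h2 := map_lin2_stdprod a b (-b) a (by ring) h1
    have hcomp : (fun p : ℝ × ℝ => a * p.1 + b * p.2)
        = Prod.fst ∘ (fun p : ℝ × ℝ => (a * p.1 + b * p.2, -b * p.1 + a * p.2)) := rfl
    rw [hcomp, ← Measure.map_map measurable_fst (by fun_prop), h2, Measure.map_fst_prod]
    simp

/-- Law of a pair of orthogonal linear combinations of two independent standard Gaussians. -/
lemma map_pair_lin {Ω : Type*} [MeasurableSpace Ω] (μ : Measure Ω) [IsProbabilityMeasure μ]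
    {X Y : Ω → ℝ} (hX : Measurable X) (hY : Measurable Y) (hind : IndepFun X Y μ)
    (hXl : μ.map X = gaussianReal 0 1) (hYl : μ.map Y = gaussianReal 0 1)
    (a b a' b' : ℝ) (horth : a * a' + b * b' = 0) (h1 : a ≠ 0 ∨ b ≠ 0) :
    μ.map (fun ω => (a * X ω + b * Y ω, a' * X ω + b' * Y ω))
      = (gaussianReal 0 ((a ^ 2 + b ^ 2).toNNReal)).prod
          (gaussianReal 0 ((a' ^ 2 + b' ^ 2).toNNReal)) := by
  have hp : μ.map (fun ω => (X ω, Y ω)) = (gaussianReal 0 1).prod (gaussianReal 0 1) := by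
    rw [(indepFun_iff_map_prod_eq_prod_map_map hX.aemeasurable hY.aemeasurable).mp hind,
      hXl, hYl]
  have hcomp : (fun ω => (a * X ω + b * Y ω, a' * X ω + b' * Y ω))
      = (fun p : ℝ × ℝ => (a * p.1 + b * p.2, a' * p.1 + b' * p.2))
        ∘ (fun ω => (X ω, Y ω)) := rfl
  rw [hcomp, ← Measure.map_map (by fun_prop) (hX.prodMk hY), hp,
    map_lin2_stdprod a b a' b' horth h1]

lemma map_lin_rv {Ω : Type*} [MeasurableSpace Ω] (μ : Measure Ω) [IsProbabilityMeasure μ]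
    {X Y : Ω → ℝ} (hX : Measurable X) (hY : Measurable Y) (hind : IndepFun X Y μ)
    (hXl : μ.map X = gaussianReal 0 1) (hYl : μ.map Y = gaussianReal 0 1) (a b : ℝ) :
    μ.map (fun ω => a * X ω + b * Y ω) = gaussianReal 0 ((a ^ 2 + b ^ 2).toNNReal) := by
  have hp : μ.map (fun ω => (X ω, Y ω)) = (gaussianReal 0 1).prod (gaussianReal 0 1) := by
    rw [(indepFun_iff_map_prod_eq_prod_map_map hX.aemeasurable hY.aemeasurable).mp hind,
      hXl, hYl]
  have hcomp : (fun ω => a * X ω + b * Y ω)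
      = (fun p : ℝ × ℝ => a * p.1 + b * p.2) ∘ (fun ω => (X ω, Y ω)) := rfl
  rw [hcomp, ← Measure.map_map (by fun_prop) (hX.prodMk hY), hp, map_lin1_stdprod]




lemma ae_const {Ω : Type*} [MeasurableSpace Ω] {μ : Measure Ω} {X : Ω → ℝ}
    (hX : Measurable X) (c : ℝ) (h : μ.map X = Measure.dirac c) :
    X =ᵐ[μ] fun _ => c := by
  have h0 : μ.map X {c}ᶜ = 0 := by rw [h]; simp
  rw [Measure.map_apply hX (measurableSet_singleton c).compl] at h0
  exact ae_iff.mpr h0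

lemma map_comp_rv {Ω : Type*} [MeasurableSpace Ω] {μ : Measure Ω} {X : Ω → ℝ}
    (hX : Measurable X) {f : ℝ → ℝ} (hf : Measurable f) :
    μ.map (fun ω => f (X ω)) = (μ.map X).map f :=
  (Measure.map_map hf hX).symm

lemma toNN_sq_mul (c v : ℝ) (hv : 0 ≤ v) :
    (NNReal.mk (c ^ 2) (sq_nonneg c) * v.toNNReal : ℝ≥0) = (c ^ 2 * v).toNNReal := by
  refine NNReal.coe_injective ?_
  simp [Real.coe_toNNReal _ hv, Real.coe_toNNReal _ (by positivity : (0:ℝ) ≤ c ^ 2 * v)]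

lemma std_of_gauss {Ω : Type*} [MeasurableSpace Ω] {μ : Measure Ω} {X : Ω → ℝ}
    (hX : Measurable X) {m v : ℝ} (hv : 0 < v)
    (hXl : μ.map X = gaussianReal m v.toNNReal) :
    μ.map (fun ω => (Real.sqrt v)⁻¹ * (X ω - m)) = gaussianReal 0 1 := by
  have hs : Real.sqrt v ≠ 0 := by positivity
  have h1 : μ.map (fun ω => X ω + (-m)) = gaussianReal 0 v.toNNReal := by
    rw [map_comp_rv hX (f := fun x => x + (-m)) (by fun_prop), hXl, gaussianReal_map_add_const]
    simp
  have h2 : μ.map (fun ω => (Real.sqrt v)⁻¹ * (X ω + (-m)))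
      = gaussianReal 0 ((((Real.sqrt v)⁻¹) ^ 2 * v).toNNReal) := by
    rw [map_comp_rv (hX.add_const (-m)) (f := fun x => (Real.sqrt v)⁻¹ * x) (by fun_prop), h1,
      gaussianReal_map_const_mul, toNN_sq_mul _ _ hv.le, mul_zero]
  have h3 : ((Real.sqrt v)⁻¹ ^ 2 * v).toNNReal = 1 := by
    rw [inv_pow, Real.sq_sqrt hv.le, inv_mul_cancel₀ hv.ne']
    simp
  rw [show (fun ω => (Real.sqrt v)⁻¹ * (X ω - m)) = fun ω => (Real.sqrt v)⁻¹ * (X ω + (-m))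
      from by funext ω; ring_nf, h2, h3]

/-- Sum of independent Gaussian random variables is Gaussian. -/
lemma map_add_gauss {Ω : Type*} [MeasurableSpace Ω] {μ : Measure Ω} [IsProbabilityMeasure μ]
    {X Y : Ω → ℝ} (hX : Measurable X) (hY : Measurable Y) (hind : IndepFun X Y μ)
    {m1 m2 v1 v2 : ℝ} (hv1 : 0 ≤ v1) (hv2 : 0 ≤ v2)
    (hXl : μ.map X = gaussianReal m1 v1.toNNReal)
    (hYl : μ.map Y = gaussianReal m2 v2.toNNReal) :
    μ.map (fun ω => X ω + Y ω) = gaussianReal (m1 + m2) ((v1 + v2).toNNReal) := by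
  rcases eq_or_lt_of_le hv1 with hv1' | hv1'
  · have hd : μ.map X = Measure.dirac m1 := by
      rw [hXl, ← hv1', Real.toNNReal_zero, gaussianReal_zero_var]
    have hae : X =ᵐ[μ] fun _ => m1 := ae_const hX m1 hd
    have : μ.map (fun ω => X ω + Y ω) = μ.map (fun ω => m1 + Y ω) :=
      Measure.map_congr (hae.mono fun ω h => by simp only [h])
    rw [this, map_comp_rv hY (f := fun x => m1 + x) (by fun_prop), hYl,
      gaussianReal_map_const_add, add_comm m2 m1, ← hv1', zero_add]
  rcases eq_or_lt_of_le hv2 with hv2' | hv2'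
  · have hd : μ.map Y = Measure.dirac m2 := by
      rw [hYl, ← hv2', Real.toNNReal_zero, gaussianReal_zero_var]
    have hae : Y =ᵐ[μ] fun _ => m2 := ae_const hY m2 hd
    have : μ.map (fun ω => X ω + Y ω) = μ.map (fun ω => X ω + m2) :=
      Measure.map_congr (hae.mono fun ω h => by simp only [h])
    rw [this, map_comp_rv hX (f := fun x => x + m2) (by fun_prop), hXl,
      gaussianReal_map_add_const, ← hv2', add_zero]
  · set sa := Real.sqrt v1 with hsa
    set sb := Real.sqrt v2 with hsb
    have hsa0 : sa ≠ 0 := by positivity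
    have hsb0 : sb ≠ 0 := by positivity
    set X0 := fun ω => sa⁻¹ * (X ω - m1) with hX0
    set Y0 := fun ω => sb⁻¹ * (Y ω - m2) with hY0
    have hX0m : Measurable X0 := (hX.add_const (-m1)).const_mul _
    have hY0m : Measurable Y0 := (hY.add_const (-m2)).const_mul _
    have hX0l : μ.map X0 = gaussianReal 0 1 := std_of_gauss hX hv1' hXl
    have hY0l : μ.map Y0 = gaussianReal 0 1 := std_of_gauss hY hv2' hYl
    have hind0 : IndepFun X0 Y0 μ :=
      hind.comp ((measurable_id.add_const (-m1)).const_mul sa⁻¹)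
        ((measurable_id.add_const (-m2)).const_mul sb⁻¹)
    have hlin : μ.map (fun ω => sa * X0 ω + sb * Y0 ω)
        = gaussianReal 0 ((sa ^ 2 + sb ^ 2).toNNReal) :=
      map_lin_rv μ hX0m hY0m hind0 hX0l hY0l sa sb
    have hsum : (fun ω => X ω + Y ω)
        = fun ω => (m1 + m2) + (sa * X0 ω + sb * Y0 ω) := by
      funext ω
      rw [hX0, hY0]
      field_simp
      ring
    rw [hsum, map_comp_rv (X := fun ω => sa * X0 ω + sb * Y0 ω) (((hX0m.const_mul sa).add (hY0m.const_mul sb)))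
        (f := fun x => (m1 + m2) + x) (by fun_prop), hlin, gaussianReal_map_const_add, zero_add,
      hsa, hsb, Real.sq_sqrt hv1, Real.sq_sqrt hv2]




/-- The affine Gaussian kernel `z ↦ N(u + v z, w)`. -/
noncomputable def gaussKer (u v : ℝ) (w : ℝ≥0) : Kernel ℝ ℝ where
  toFun := fun z => gaussianReal (u + v * z) w
  measurable' := by
    apply Measure.measurable_of_measurable_coe
    intro s hs
    by_cases hw : w = 0
    · subst hw
      simp only [gaussianReal_zero_var]
      simp_rw [Measure.dirac_apply' _ hs]
      exact (measurable_one.indicator hs).comp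
        (measurable_const.add (measurable_id.const_mul v))
    · simp_rw [gaussianReal_apply _ hw _]
      have heq : ∀ z : ℝ, (∫⁻ x in s, gaussianPDF (u + v * z) w x)
          = ∫⁻ x, s.indicator (gaussianPDF (u + v * z) w) x := by
        intro z
        rw [lintegral_indicator hs]
      simp_rw [heq]
      apply Measurable.lintegral_prod_right
        (f := fun z x => s.indicator (gaussianPDF (u + v * z) w) x)
      have hj : Measurable (fun p : ℝ × ℝ => gaussianPDF (u + v * p.1) w p.2) := by
        simp only [gaussianPDF, gaussianPDFReal]
        refine Measurable.ennreal_ofReal ?_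
        fun_prop
      have : Function.uncurry (fun z x => s.indicator (gaussianPDF (u + v * z) w) x)
          = (Set.univ ×ˢ s).indicator (fun p : ℝ × ℝ => gaussianPDF (u + v * p.1) w p.2) := by
        funext p
        by_cases hp : p.2 ∈ s <;>
          simp [Function.uncurry, Set.indicator, hp]
      rw [this]
      exact hj.indicator (MeasurableSet.univ.prod hs)

instance (u v : ℝ) (w : ℝ≥0) : IsMarkovKernel (gaussKer u v w) :=
  ⟨fun z => by rw [show gaussKer u v w z = gaussianReal (u + v * z) w from rfl]; infer_instance⟩

lemma gaussKer_apply (u v : ℝ) (w : ℝ≥0) (z : ℝ) :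
    gaussKer u v w z = gaussianReal (u + v * z) w := rfl


lemma toNN_sq_one (c : ℝ) : (NNReal.mk (c ^ 2) (sq_nonneg c) * 1 : ℝ≥0) = (c ^ 2).toNNReal := by
  refine NNReal.coe_injective ?_
  simp [Real.coe_toNNReal _ (sq_nonneg c)]

lemma indepFun_const_left {Ω : Type*} [MeasurableSpace Ω] {μ : Measure Ω}
    [IsProbabilityMeasure μ] (c : ℝ) {Z : Ω → ℝ} (hZ : Measurable Z) :
    IndepFun (fun _ => c) Z μ := by
  rw [indepFun_iff_map_prod_eq_prod_map_map aemeasurable_const hZ.aemeasurable]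
  have h : (fun ω => ((fun _ : Ω => c) ω, Z ω)) = (fun z : ℝ => (c, z)) ∘ Z := rfl
  rw [h, ← Measure.map_map measurable_prodMk_left hZ, Measure.map_const]
  simp [Measure.dirac_prod]

end KalmanAux

open KalmanAux

/-- **One-step, one-dimensional Kalman update for conditionally Gaussian sequences.**
Let `G ∼ N(M, Q)`, `B₁, B₂ ∼ N(0,1)` be independent, and set
`Y = f₀ + f₁ G + s B₁ + g B₂`, `Z = h₀ + h₁ G + ℓ B₂`, with `ℓ² + h₁² Q > 0`.  Then for
(law of `Z`)-a.e. `z`, the conditional distribution of `Y` given `Z = z` (the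
disintegration `condDistrib Y Z μ`) is the Gaussian `N(M'(z), Q')` with
`M'(z) = f₀ + f₁ M + (gℓ + f₁ Q h₁)(ℓ² + h₁² Q)⁻¹ (z − h₀ − h₁ M)` and
`Q' = f₁² Q + s² + g² − (gℓ + f₁ Q h₁)² (ℓ² + h₁² Q)⁻¹` (and `Q' ≥ 0`). -/
theorem kalman_update_one_dimensional
    {Ω : Type*} [mΩ : MeasurableSpace Ω]
    (μ : Measure Ω) [IsProbabilityMeasure μ]
    (G B1 B2 : Ω → ℝ) (hG : Measurable G) (hB1 : Measurable B1) (hB2 : Measurable B2)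
    (hIndep : iIndepFun ![G, B1, B2] μ)
    (M Q : ℝ) (hQ : 0 ≤ Q)
    (hGlaw : μ.map G = gaussianReal M Q.toNNReal)
    (hB1law : μ.map B1 = gaussianReal 0 1)
    (hB2law : μ.map B2 = gaussianReal 0 1)
    (f0 f1 s g h0 h1 ℓ : ℝ) (hpos : 0 < ℓ ^ 2 + h1 ^ 2 * Q)
    (Y Z : Ω → ℝ)
    (hY : Y = fun ω => f0 + f1 * G ω + s * B1 ω + g * B2 ω)
    (hZ : Z = fun ω => h0 + h1 * G ω + ℓ * B2 ω) :
    0 ≤ f1 ^ 2 * Q + s ^ 2 + g ^ 2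
        - (g * ℓ + f1 * Q * h1) ^ 2 * (ℓ ^ 2 + h1 ^ 2 * Q)⁻¹ ∧
      ∀ᵐ z ∂(μ.map Z),
        condDistrib Y Z μ z
          = gaussianReal
              (f0 + f1 * M
                + (g * ℓ + f1 * Q * h1) * (ℓ ^ 2 + h1 ^ 2 * Q)⁻¹ * (z - h0 - h1 * M))
              (f1 ^ 2 * Q + s ^ 2 + g ^ 2
                - (g * ℓ + f1 * Q * h1) ^ 2 * (ℓ ^ 2 + h1 ^ 2 * Q)⁻¹).toNNReal := by
  subst hY hZ
  set D : ℝ := ℓ ^ 2 + h1 ^ 2 * Q with hDdef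
  have hD : 0 < D := hpos
  set c : ℝ := (g * ℓ + f1 * Q * h1) * (ℓ ^ 2 + h1 ^ 2 * Q)⁻¹ with hcdef
  set Q' : ℝ := f1 ^ 2 * Q + s ^ 2 + g ^ 2
      - (g * ℓ + f1 * Q * h1) ^ 2 * (ℓ ^ 2 + h1 ^ 2 * Q)⁻¹ with hQ'def
  set α1 : ℝ := f1 - c * h1 with hα1def
  set α2 : ℝ := g - c * ℓ with hα2def
  set α0 : ℝ := f0 - c * h0 with hα0def
  have hQ'eq : Q' = α1 ^ 2 * Q + s ^ 2 + α2 ^ 2 := by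
    rw [hQ'def, hα1def, hα2def, hcdef]
    field_simp [show ℓ ^ 2 + Q * h1 ^ 2 ≠ 0 from by rw [mul_comm Q]; exact hD.ne']
    ring
  have hQ'pos : 0 ≤ Q' := by rw [hQ'eq]; positivity
  refine ⟨hQ'pos, ?_⟩
  have horth : α1 * h1 * Q + α2 * ℓ = 0 := by
    rw [hα1def, hα2def, hcdef]
    field_simp [show ℓ ^ 2 + Q * h1 ^ 2 ≠ 0 from by rw [mul_comm Q]; exact hD.ne']
    ring
  -- the random variables
  set Zf : Ω → ℝ := fun ω => h0 + h1 * G ω + ℓ * B2 ω with hZf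
  set Z0 : Ω → ℝ := fun ω => h1 * G ω + ℓ * B2 ω with hZ0
  set V : Ω → ℝ := fun ω => α1 * G ω + α2 * B2 ω with hV
  set T : Ω → ℝ := fun ω => s * B1 ω + V ω with hT
  set W : Ω → ℝ := fun ω => α0 + T ω with hW
  have hZ0m : Measurable Z0 := by fun_prop
  have hVm : Measurable V := by fun_prop
  have hTm : Measurable T := by fun_prop
  have hWm : Measurable W := by fun_prop
  have hZfm : Measurable Zf := by fun_prop
  have hYm : Measurable (fun ω => f0 + f1 * G ω + s * B1 ω + g * B2 ω) := by fun_prop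
  have hYcW : ∀ ω, f0 + f1 * G ω + s * B1 ω + g * B2 ω = c * Zf ω + W ω := by
    intro ω
    rw [hW, hT, hV, hZf, hα0def, hα1def, hα2def]
    ring
  -- base independence facts
  have hGB2 : IndepFun G B2 μ := by
    have h := hIndep.indepFun (i := 0) (j := 2) (by decide)
    simpa using h
  have hmeas3 : ∀ i, Measurable (![G, B1, B2] i) := by
    intro i
    fin_cases i
    · exact hG
    · exact hB1
    · exact hB2
  have hPB1 : IndepFun (fun ω => (G ω, B2 ω)) B1 μ := by
    have h := hIndep.indepFun_prodMk hmeas3 0 2 1 (by decide) (by decide)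
    simpa using h
  have hB1P : IndepFun B1 (fun ω => (G ω, B2 ω)) μ := hPB1.symm
  -- KEY step : independence of V and Z0 together with their laws
  have hKEY : IndepFun V Z0 μ
      ∧ μ.map V = gaussianReal (α1 * M) ((α1 ^ 2 * Q + α2 ^ 2).toNNReal)
      ∧ μ.map Z0 = gaussianReal (h1 * M) (D.toNNReal) := by
    by_cases hQ0 : Q = 0
    · -- degenerate case : G is a.s. constant
      have hl : ℓ ≠ 0 := by
        intro h
        rw [hDdef, hQ0, h] at hD
        norm_num at hD
      have hα2 : α2 = 0 := by
        have h2 : α2 * ℓ = 0 := by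
          have := horth
          rw [hQ0] at this
          linarith [this]
        rcases mul_eq_zero.mp h2 with h | h
        · exact h
        · exact absurd h hl
      have hGd : μ.map G = Measure.dirac M := by
        rw [hGlaw, hQ0]
        simp [gaussianReal_zero_var]
      have hGae : G =ᵐ[μ] fun _ => M := ae_const hG M hGd
      have hVae : V =ᵐ[μ] fun _ => α1 * M := by
        filter_upwards [hGae] with ω hω
        show α1 * G ω + α2 * B2 ω = α1 * M
        rw [hω, hα2]
        ring
      have hVl : μ.map V = gaussianReal (α1 * M) ((α1 ^ 2 * Q + α2 ^ 2).toNNReal) := by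
        have hv0 : (α1 ^ 2 * Q + α2 ^ 2 : ℝ) = 0 := by rw [hQ0, hα2]; ring
        rw [Measure.map_congr hVae, Measure.map_const, hv0, Real.toNNReal_zero,
          gaussianReal_zero_var]
        simp
      have hZ0ae : Z0 =ᵐ[μ] fun ω => h1 * M + ℓ * B2 ω := by
        filter_upwards [hGae] with ω hω
        show h1 * G ω + ℓ * B2 ω = h1 * M + ℓ * B2 ω
        rw [hω]
      have hZ0l : μ.map Z0 = gaussianReal (h1 * M) (D.toNNReal) := by
        have hlB2 : μ.map (fun ω => ℓ * B2 ω) = gaussianReal 0 ((ℓ ^ 2).toNNReal) := by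
          rw [map_comp_rv hB2 (f := fun x => ℓ * x) (by fun_prop), hB2law,
            gaussianReal_map_const_mul, mul_zero, toNN_sq_one]
        have hDeq : (ℓ ^ 2 : ℝ) = D := by rw [hDdef, hQ0]; ring
        rw [Measure.map_congr hZ0ae,
          map_comp_rv (hB2.const_mul ℓ) (f := fun x => h1 * M + x) (by fun_prop), hlB2,
          gaussianReal_map_const_add, zero_add, hDeq]
      refine ⟨?_, hVl, hZ0l⟩
      exact (KalmanAux.indepFun_const_left (α1 * M) hZ0m).congr hVae.symm Filter.EventuallyEq.rfl
    · -- nondegenerate case : rotate the pair (G, B2)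
      have hQpos : 0 < Q := lt_of_le_of_ne hQ (Ne.symm hQ0)
      set sq : ℝ := Real.sqrt Q with hsqdef
      have hsq0 : sq ≠ 0 := by positivity
      have hsq2 : sq ^ 2 = Q := Real.sq_sqrt hQ
      set G0 : Ω → ℝ := fun ω => sq⁻¹ * (G ω - M) with hG0def
      have hG0m : Measurable G0 := by fun_prop
      have hG0l : μ.map G0 = gaussianReal 0 1 := std_of_gauss hG hQpos hGlaw
      have hindG0B2 : IndepFun G0 B2 μ :=
        hGB2.comp (show Measurable (fun x : ℝ => sq⁻¹ * (x - M)) by fun_prop) measurable_id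
      have horth2 : (h1 * sq) * (α1 * sq) + ℓ * α2 = 0 := by
        linear_combination horth + h1 * α1 * hsq2
      have hab : h1 * sq ≠ 0 ∨ ℓ ≠ 0 := by
        by_cases hl : ℓ = 0
        · left
          have hh1 : h1 ≠ 0 := by
            intro h
            rw [hDdef, hl, h] at hD
            norm_num at hD
          exact mul_ne_zero hh1 hsq0
        · right; exact hl
      have hZ0lin : Z0 = fun ω => h1 * M + ((h1 * sq) * G0 ω + ℓ * B2 ω) := by
        funext ω
        show h1 * G ω + ℓ * B2 ω = _
        rw [hG0def]
        field_simp
        ring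
      have hVlin : V = fun ω => α1 * M + ((α1 * sq) * G0 ω + α2 * B2 ω) := by
        funext ω
        show α1 * G ω + α2 * B2 ω = _
        rw [hG0def]
        field_simp
        ring
      have hZlinm : Measurable (fun ω => (h1 * sq) * G0 ω + ℓ * B2 ω) := by fun_prop
      have hVlinm : Measurable (fun ω => (α1 * sq) * G0 ω + α2 * B2 ω) := by fun_prop
      have hZlinl : μ.map (fun ω => (h1 * sq) * G0 ω + ℓ * B2 ω)
          = gaussianReal 0 (((h1 * sq) ^ 2 + ℓ ^ 2).toNNReal) :=
        map_lin_rv μ hG0m hB2 hindG0B2 hG0l hB2law _ _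
      have hVlinl : μ.map (fun ω => (α1 * sq) * G0 ω + α2 * B2 ω)
          = gaussianReal 0 (((α1 * sq) ^ 2 + α2 ^ 2).toNNReal) :=
        map_lin_rv μ hG0m hB2 hindG0B2 hG0l hB2law _ _
      have hDeq : ((h1 * sq) ^ 2 + ℓ ^ 2 : ℝ) = D := by
        rw [hDdef]
        linear_combination h1 ^ 2 * hsq2
      have hVeq : ((α1 * sq) ^ 2 + α2 ^ 2 : ℝ) = α1 ^ 2 * Q + α2 ^ 2 := by
        linear_combination α1 ^ 2 * hsq2
      have hpair := map_pair_lin μ hG0m hB2 hindG0B2 hG0l hB2law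
        (h1 * sq) ℓ (α1 * sq) α2 horth2 hab
      have hindlin : IndepFun (fun ω => (h1 * sq) * G0 ω + ℓ * B2 ω)
          (fun ω => (α1 * sq) * G0 ω + α2 * B2 ω) μ := by
        rw [indepFun_iff_map_prod_eq_prod_map_map hZlinm.aemeasurable hVlinm.aemeasurable,
          hpair, hZlinl, hVlinl]
      have hZ0l : μ.map Z0 = gaussianReal (h1 * M) (D.toNNReal) := by
        rw [hZ0lin, map_comp_rv hZlinm (f := fun x => h1 * M + x) (by fun_prop), hZlinl,
          gaussianReal_map_const_add, zero_add, hDeq]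
      have hVl : μ.map V = gaussianReal (α1 * M) ((α1 ^ 2 * Q + α2 ^ 2).toNNReal) := by
        rw [hVlin, map_comp_rv hVlinm (f := fun x => α1 * M + x) (by fun_prop), hVlinl,
          gaussianReal_map_const_add, zero_add, hVeq]
      refine ⟨?_, hVl, hZ0l⟩
      rw [hVlin, hZ0lin]
      exact hindlin.symm.comp (show Measurable (fun x : ℝ => α1 * M + x) by fun_prop)
        (show Measurable (fun x : ℝ => h1 * M + x) by fun_prop)
  obtain ⟨hindVZ0, hVl, hZ0l⟩ := hKEY
  -- independence of B1 from (V, Z0) and grouping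
  have hB1VZ0 : IndepFun B1 (fun ω => (V ω, Z0 ω)) μ := by
    have h := hB1P.comp measurable_id
      (show Measurable (fun p : ℝ × ℝ => (α1 * p.1 + α2 * p.2, h1 * p.1 + ℓ * p.2)) by fun_prop)
    exact h
  have hB1V : IndepFun B1 V μ := by
    have h := hB1VZ0.comp measurable_id (measurable_fst (α := ℝ) (β := ℝ))
    exact h
  have hsB1l : μ.map (fun ω => s * B1 ω) = gaussianReal 0 ((s ^ 2).toNNReal) := by
    rw [map_comp_rv hB1 (f := fun x => s * x) (by fun_prop), hB1law,
      gaussianReal_map_const_mul, mul_zero, toNN_sq_one]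
  have hsB1V : IndepFun (fun ω => s * B1 ω) V μ :=
    hB1V.comp (measurable_id.const_mul s) measurable_id
  have hTl : μ.map T = gaussianReal (α1 * M) (Q'.toNNReal) := by
    have h := map_add_gauss ((hB1.const_mul s)) hVm hsB1V (sq_nonneg s)
      (by positivity) hsB1l hVl
    rw [hT]
    rw [show (fun ω => s * B1 ω + V ω) = fun ω => (fun ω' => s * B1 ω') ω + V ω from rfl]
    rw [h, zero_add, hQ'eq]
    congr 1
    ring_nf
  -- grouping : T is independent of Z0
  have hmapB1VZ0 : μ.map (fun ω => (B1 ω, (V ω, Z0 ω)))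
      = (μ.map B1).prod ((μ.map V).prod (μ.map Z0)) := by
    rw [(indepFun_iff_map_prod_eq_prod_map_map hB1.aemeasurable
      (hVm.prodMk hZ0m).aemeasurable).mp hB1VZ0]
    congr 1
    exact (indepFun_iff_map_prod_eq_prod_map_map hVm.aemeasurable hZ0m.aemeasurable).mp hindVZ0
  have hmapB1V : μ.map (fun ω => (B1 ω, V ω)) = (μ.map B1).prod (μ.map V) :=
    (indepFun_iff_map_prod_eq_prod_map_map hB1.aemeasurable hVm.aemeasurable).mp hB1V
  have hmapT : μ.map T = ((μ.map B1).prod (μ.map V)).map (fun p : ℝ × ℝ => s * p.1 + p.2) := by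
    rw [← hmapB1V, hT]
    rw [show (fun ω => s * B1 ω + V ω)
        = (fun p : ℝ × ℝ => s * p.1 + p.2) ∘ (fun ω => (B1 ω, V ω)) from rfl]
    exact (Measure.map_map (by fun_prop) (hB1.prodMk hVm)).symm
  have hindTZ0 : IndepFun T Z0 μ := by
    rw [indepFun_iff_map_prod_eq_prod_map_map hTm.aemeasurable hZ0m.aemeasurable]
    have hψ : (fun ω => (T ω, Z0 ω))
        = ((Prod.map (fun p : ℝ × ℝ => s * p.1 + p.2) (id : ℝ → ℝ))
            ∘ (MeasurableEquiv.prodAssoc (α := ℝ) (β := ℝ) (γ := ℝ)).symm)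
          ∘ (fun ω => (B1 ω, (V ω, Z0 ω))) := rfl
    rw [hψ, ← Measure.map_map (by fun_prop) (hB1.prodMk (hVm.prodMk hZ0m)), hmapB1VZ0,
      ← Measure.map_map (by fun_prop) (MeasurableEquiv.prodAssoc.symm.measurable)]
    have hassoc : Measure.map (MeasurableEquiv.prodAssoc
          (α := ℝ) (β := ℝ) (γ := ℝ)).symm
          ((μ.map B1).prod ((μ.map V).prod (μ.map Z0)))
        = ((μ.map B1).prod (μ.map V)).prod (μ.map Z0) :=
      ((measurePreserving_prodAssoc (μ.map B1) (μ.map V) (μ.map Z0)).symm _).map_eq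
    rw [hassoc, ← Measure.map_prod_map _ _ (by fun_prop) measurable_id, Measure.map_id,
      ← hmapT]
  -- from T, Z0 to W, Z
  have hindWZ : IndepFun W Zf μ := by
    have h := hindTZ0.comp (show Measurable (fun x : ℝ => α0 + x) by fun_prop)
      (show Measurable (fun x : ℝ => h0 + x) by fun_prop)
    exact h.congr (Filter.Eventually.of_forall fun ω => rfl)
      (Filter.Eventually.of_forall fun ω => by
        show h0 + Z0 ω = Zf ω
        rw [hZ0, hZf]; ring)
  have hWl : μ.map W = gaussianReal (α0 + α1 * M) (Q'.toNNReal) := by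
    rw [hW, map_comp_rv hTm (f := fun x => α0 + x) (by fun_prop), hTl,
      gaussianReal_map_const_add, add_comm (α1 * M) α0]
  have hZfl : μ.map Zf = gaussianReal (h0 + h1 * M) (D.toNNReal) := by
    rw [hZf]
    rw [show (fun ω => h0 + h1 * G ω + ℓ * B2 ω) = fun ω => h0 + Z0 ω from by
      funext ω; rw [hZ0]; ring]
    rw [map_comp_rv hZ0m (f := fun x => h0 + x) (by fun_prop), hZ0l,
      gaussianReal_map_const_add, add_comm (h1 * M) h0]
  -- the joint law equals the compProd with the Gaussian kernel
  set κ : Kernel ℝ ℝ := gaussKer (α0 + α1 * M) c Q'.toNNReal with hκdef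
  set ρ : Measure (ℝ × ℝ) :=
    μ.map (fun ω => (Zf ω, f0 + f1 * G ω + s * B1 ω + g * B2 ω)) with hρdef
  have hρfst : ρ.fst = μ.map Zf := Measure.fst_map_prodMk hYm
  haveI hPρ : IsProbabilityMeasure ρ := by
    rw [hρdef]
    exact Measure.isProbabilityMeasure_map (hZfm.prodMk hYm).aemeasurable
  haveI hPZ : IsProbabilityMeasure (μ.map Zf) :=
    Measure.isProbabilityMeasure_map hZfm.aemeasurable
  have hindZW : IndepFun Zf W μ := hindWZ.symm
  have hmapZW : μ.map (fun ω => (Zf ω, W ω)) = (μ.map Zf).prod (μ.map W) :=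
    (indepFun_iff_map_prod_eq_prod_map_map hZfm.aemeasurable hWm.aemeasurable).mp hindZW
  have hcompProd : ρ = (μ.map Zf) ⊗ₘ κ := by
    refine MeasureTheory.ext_of_generate_finite _ generateFrom_prod.symm isPiSystem_prod ?_ ?_
    · rintro u ⟨A, hA, B, hB, rfl⟩
      simp only [Set.mem_setOf_eq] at hA hB
      have hE : MeasurableSet {p : ℝ × ℝ | p.1 ∈ A ∧ c * p.1 + p.2 ∈ B} :=
        (measurable_fst hA).inter (((measurable_fst.const_mul c).add measurable_snd) hB)
      have hpre : (fun ω => (Zf ω, f0 + f1 * G ω + s * B1 ω + g * B2 ω)) ⁻¹' (A ×ˢ B)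
          = (fun ω => (Zf ω, W ω)) ⁻¹' {p : ℝ × ℝ | p.1 ∈ A ∧ c * p.1 + p.2 ∈ B} := by
        ext ω
        simp only [Set.mem_preimage, Set.mem_prod, Set.mem_setOf_eq, hYcW ω]
      have hL : ρ (A ×ˢ B)
          = ∫⁻ z, (μ.map W) (Prod.mk z ⁻¹' {p : ℝ × ℝ | p.1 ∈ A ∧ c * p.1 + p.2 ∈ B})
              ∂(μ.map Zf) := by
        rw [hρdef, Measure.map_apply (hZfm.prodMk hYm) (hA.prod hB), hpre,
          ← Measure.map_apply (hZfm.prodMk hWm) hE, hmapZW, Measure.prod_apply hE]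
      have hR : ((μ.map Zf) ⊗ₘ κ) (A ×ˢ B)
          = ∫⁻ z, κ z (Prod.mk z ⁻¹' (A ×ˢ B)) ∂(μ.map Zf) :=
        Measure.compProd_apply (hA.prod hB)
      rw [hL, hR]
      refine lintegral_congr fun z => ?_
      by_cases hz : z ∈ A
      · have h1 : Prod.mk z ⁻¹' {p : ℝ × ℝ | p.1 ∈ A ∧ c * p.1 + p.2 ∈ B}
            = (fun w => c * z + w) ⁻¹' B := by
          ext w
          simp [hz]
        have h2 : Prod.mk z ⁻¹' (A ×ˢ B) = B := by
          ext w
          simp [hz]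
        rw [h1, h2, ← Measure.map_apply (show Measurable (fun w : ℝ => c * z + w) from
          by fun_prop) hB, hWl,
          gaussianReal_map_const_add, hκdef, gaussKer_apply]
      · have h1 : Prod.mk z ⁻¹' {p : ℝ × ℝ | p.1 ∈ A ∧ c * p.1 + p.2 ∈ B} = ∅ := by
          ext w
          simp [hz]
        have h2 : Prod.mk z ⁻¹' (A ×ˢ B) = ∅ := by
          ext w
          simp [hz]
        rw [h1, h2]
        simp
    · have hR : ((μ.map Zf) ⊗ₘ κ) Set.univ
          = ∫⁻ z, κ z (Prod.mk z ⁻¹' (Set.univ : Set (ℝ × ℝ))) ∂(μ.map Zf) :=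
        Measure.compProd_apply MeasurableSet.univ
      rw [hR]
      simp [measure_univ]
  have huniq := ProbabilityTheory.eq_condKernel_of_measure_eq_compProd κ
    (ρ := ρ) (by rw [hρfst]; exact hcompProd)
  rw [hρfst] at huniq
  filter_upwards [huniq] with z hz
  have hcd : condDistrib (fun ω => f0 + f1 * G ω + s * B1 ω + g * B2 ω)
      Zf μ = ρ.condKernel := by
    rw [condDistrib_def]
  rw [hcd, ← hz, hκdef, gaussKer_apply]
  have hmean : (α0 + α1 * M) + c * z = f0 + f1 * M + c * (z - h0 - h1 * M) := by
    rw [hα0def, hα1def]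
    ring
  rw [hmean]
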